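/- arXiv:2003.02293 — 2 statements merged into one kernel-verified Lean document; each statement's English description precedes it below -/
import Mathlib

section
/- If a sequence {P_i} of convex bodies in ℝⁿ converges to a convex body Q in the symmetric-difference volume distance d^V (i.e., vol(P_i △ Q) → 0), then the normalized uniform measures m_{P_i} converge to m_Q in the L²-Wasserstein distance. -/
/-!
Couple `m_P` and `m_Q` by keeping their common part `vol|(P ∩ Q) / max (vol P) (vol Q)` fixed on
the diagonal and transporting the rest independently. The mass moved is at most
`vol (P ∆ Q) / vol Q`, over distances at most `diam (P ∪ Q)`, so
`W₂² ≤ diam (P ∪ Q)² · vol (P ∆ Q) / vol Q`. The diameters stay bounded by convexity: if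
`x ∈ P` were far from `Q ⊆ B(0, R)`, then the homothety of ratio `1/2` centred at `x` would map
`P ∩ Q` into `P \ Q`, giving `vol (P ∆ Q) ≥ 2⁻ⁿ vol (P ∩ Q)`, which is impossible once
`vol (P ∆ Q)` is small.
-/

open MeasureTheory Filter Topology Metric
open scoped RealInnerProductSpace ENNReal

abbrev Euc (n : ℕ) := EuclideanSpace ℝ (Fin n)

def IsConvexBody {n : ℕ} (C : Set (Euc n)) : Prop :=
  Convex ℝ C ∧ IsCompact C ∧ (interior C).Nonempty

noncomputable def unifMeasure {n : ℕ} (C : Set (Euc n)) : Measure (Euc n) :=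
  (volume C)⁻¹ • volume.restrict C

noncomputable def transportCost {n : ℕ} (μ ν : Measure (Euc n)) : ℝ :=
  sInf { c : ℝ | ∃ ξ : Measure (Euc n × Euc n),
    ξ.map Prod.fst = μ ∧ ξ.map Prod.snd = ν ∧ c = ∫ p, dist p.1 p.2 ^ 2 ∂ξ }

noncomputable def W2 {n : ℕ} (μ ν : Measure (Euc n)) : ℝ :=
  Real.sqrt (transportCost μ ν)

def msupport {n : ℕ} (μ : Measure (Euc n)) : Set (Euc n) :=
  {x | ∀ U ∈ nhds x, μ U ≠ 0}

open Set

section SymmDiff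

variable {α : Type*} [MeasurableSpace α] (μ : Measure α)

lemma measure_le_measure_inter_add_measure_symmDiff (s t : Set α) :
    μ s ≤ μ (s ∩ t) + μ (symmDiff s t) :=
  (measure_mono (s := s) (t := s ∩ t ∪ symmDiff s t) fun x hx => by
    by_cases hxt : x ∈ t <;> simp [mem_symmDiff, *]).trans (measure_union_le _ _)

lemma one_sub_measure_inter_div_max_le {s t : Set α} (hs : μ s ≠ ⊤) (ht0 : μ t ≠ 0)
    (ht : μ t ≠ ⊤) : 1 - μ (s ∩ t) / max (μ s) (μ t) ≤ μ (symmDiff s t) / μ t := by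
  set b := max (μ s) (μ t)
  have hb0 : b ≠ 0 := (pos_iff_ne_zero.2 ht0 |>.trans_le (le_max_right _ _)).ne'
  have hb : b ≤ μ (s ∩ t) + μ (symmDiff s t) := by
    refine max_le (measure_le_measure_inter_add_measure_symmDiff μ s t) ?_
    rw [inter_comm, symmDiff_comm]
    exact measure_le_measure_inter_add_measure_symmDiff μ t s
  calc 1 - μ (s ∩ t) / b ≤ μ (symmDiff s t) / b := by
        rw [tsub_le_iff_left, ENNReal.div_add_div_same, ← ENNReal.div_self hb0 (max_ne_top hs ht)]
        exact ENNReal.div_le_div_right hb b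
    _ ≤ μ (symmDiff s t) / μ t := ENNReal.div_le_div_left (le_max_right _ _) _

variable {μ}

lemma tendsto_measure_inter_of_tendsto_measure_symmDiff {ι : Type*} {l : Filter ι}
    {s : ι → Set α} {t : Set α} (h : Tendsto (fun i => μ (symmDiff (s i) t)) l (𝓝 0)) :
    Tendsto (fun i => μ (s i ∩ t)) l (𝓝 (μ t)) := by
  refine tendsto_of_tendsto_of_tendsto_of_le_of_le
    (by simpa using ENNReal.Tendsto.sub tendsto_const_nhds h (.inr ENNReal.zero_ne_top))
    tendsto_const_nhds (fun i => ?_) (fun i => measure_mono inter_subset_right)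
  rw [tsub_le_iff_right, inter_comm, symmDiff_comm]
  exact measure_le_measure_inter_add_measure_symmDiff μ t (s i)

end SymmDiff

section Coupling

variable {α : Type*} [MeasurableSpace α]

lemma map_fst_inv_smul_prod {ρ₁ ρ₂ : Measure α} [IsFiniteMeasure ρ₁] [IsFiniteMeasure ρ₂]
    (h : ρ₁ univ = ρ₂ univ) : ((ρ₂ univ)⁻¹ • ρ₁.prod ρ₂).map Prod.fst = ρ₁ := by
  rw [Measure.map_smul, Measure.map_fst_prod, smul_smul]
  rcases eq_or_ne (ρ₂ univ) 0 with h0 | h0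
  · rw [Measure.measure_univ_eq_zero.mp (h.trans h0), smul_zero]
  · rw [ENNReal.inv_mul_cancel h0 (measure_ne_top _ _), one_smul]

lemma map_snd_inv_smul_prod {ρ₁ ρ₂ : Measure α} [IsFiniteMeasure ρ₁] [IsFiniteMeasure ρ₂]
    (h : ρ₁ univ = ρ₂ univ) : ((ρ₂ univ)⁻¹ • ρ₁.prod ρ₂).map Prod.snd = ρ₂ := by
  rw [Measure.map_smul, Measure.map_snd_prod, smul_smul, h]
  rcases eq_or_ne (ρ₂ univ) 0 with h0 | h0
  · rw [Measure.measure_univ_eq_zero.mp h0, smul_zero]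
  · rw [ENNReal.inv_mul_cancel h0 (measure_ne_top _ _), one_smul]

noncomputable def overlapCoupling (μ ν γ : Measure α) : Measure (α × α) :=
  γ.map (fun x => (x, x)) + ((ν - γ) univ)⁻¹ • (μ - γ).prod (ν - γ)

lemma map_fst_map_diag (γ : Measure α) : (γ.map fun x => (x, x)).map Prod.fst = γ := by
  rw [Measure.map_map measurable_fst (by fun_prop)]
  exact Measure.map_id

lemma map_snd_map_diag (γ : Measure α) : (γ.map fun x => (x, x)).map Prod.snd = γ := by
  rw [Measure.map_map measurable_snd (by fun_prop)]
  exact Measure.map_id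

variable {μ ν γ : Measure α} [IsFiniteMeasure μ]

lemma measure_univ_sub_eq_of_le (hγμ : γ ≤ μ) (hγν : γ ≤ ν) (hmass : μ univ = ν univ) :
    (μ - γ) univ = (ν - γ) univ := by
  have : IsFiniteMeasure γ := isFiniteMeasure_of_le μ hγμ
  rw [Measure.sub_apply .univ hγμ, Measure.sub_apply .univ hγν, hmass]

variable [IsFiniteMeasure ν]

lemma overlapCoupling_map_fst (hγμ : γ ≤ μ) (hγν : γ ≤ ν) (hmass : μ univ = ν univ) :
    (overlapCoupling μ ν γ).map Prod.fst = μ := by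
  have : IsFiniteMeasure γ := isFiniteMeasure_of_le μ hγμ
  rw [overlapCoupling, Measure.map_add _ _ measurable_fst, map_fst_map_diag,
    map_fst_inv_smul_prod (measure_univ_sub_eq_of_le hγμ hγν hmass), add_comm]
  exact Measure.sub_add_cancel_of_le hγμ

lemma overlapCoupling_map_snd (hγμ : γ ≤ μ) (hγν : γ ≤ ν) (hmass : μ univ = ν univ) :
    (overlapCoupling μ ν γ).map Prod.snd = ν := by
  have : IsFiniteMeasure γ := isFiniteMeasure_of_le μ hγμ
  rw [overlapCoupling, Measure.map_add _ _ measurable_snd, map_snd_map_diag,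
    map_snd_inv_smul_prod (measure_univ_sub_eq_of_le hγμ hγν hmass), add_comm]
  exact Measure.sub_add_cancel_of_le hγν

end Coupling

section Transport

variable {n : ℕ}

lemma transportCost_le_integral {μ ν : Measure (Euc n)} {ξ : Measure (Euc n × Euc n)}
    (hξμ : ξ.map Prod.fst = μ) (hξν : ξ.map Prod.snd = ν) :
    transportCost μ ν ≤ ∫ p, dist p.1 p.2 ^ 2 ∂ξ :=
  csInf_le ⟨0, by rintro c ⟨ξ, -, -, rfl⟩; exact integral_nonneg fun p => by positivity⟩
    ⟨ξ, hξμ, hξν, rfl⟩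

lemma transportCost_nonneg (μ ν : Measure (Euc n)) : 0 ≤ transportCost μ ν :=
  Real.sInf_nonneg <| by rintro c ⟨ξ, -, -, rfl⟩; exact integral_nonneg fun p => by positivity

lemma transportCost_le_of_common_le {μ ν γ : Measure (Euc n)} [IsFiniteMeasure μ]
    [IsFiniteMeasure ν] (hγμ : γ ≤ μ) (hγν : γ ≤ ν) (hmass : μ univ = ν univ)
    {s : Set (Euc n)} (hs : Bornology.IsBounded s) (hμs : ∀ᵐ x ∂μ, x ∈ s) (hνs : ∀ᵐ x ∂ν, x ∈ s) :
    transportCost μ ν ≤ diam s ^ 2 * ((μ - γ) univ).toReal := by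
  have hξμ := overlapCoupling_map_fst hγμ hγν hmass
  have hξν := overlapCoupling_map_snd hγμ hγν hmass
  set σ : Measure (Euc n × Euc n) := ((ν - γ) univ)⁻¹ • (μ - γ).prod (ν - γ)
  have hξ : overlapCoupling μ ν γ = γ.map (fun x => (x, x)) + σ := rfl
  have : IsFiniteMeasure (overlapCoupling μ ν γ) := ⟨by
    rw [← preimage_univ (f := Prod.fst), ← Measure.map_apply measurable_fst .univ, hξμ]
    exact measure_lt_top μ _⟩
  have hbound : ∀ᵐ p ∂overlapCoupling μ ν γ, dist p.1 p.2 ^ 2 ≤ diam s ^ 2 := by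
    filter_upwards [ae_of_ae_map measurable_fst.aemeasurable (hξμ ▸ hμs),
      ae_of_ae_map measurable_snd.aemeasurable (hξν ▸ hνs)] with p hp₁ hp₂
    exact pow_le_pow_left₀ dist_nonneg (dist_le_diam_of_mem hs hp₁ hp₂) 2
  have hint : Integrable (fun p : Euc n × Euc n => dist p.1 p.2 ^ 2) (overlapCoupling μ ν γ) :=
    .of_bound (by fun_prop) _ <| hbound.mono fun p hp => by
      rwa [Real.norm_of_nonneg (by positivity)]
  have hσ : σ ≤ overlapCoupling μ ν γ := hξ ▸ Measure.le_add_left le_rfl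
  have hσuniv : σ univ = (μ - γ) univ := by
    rw [← map_fst_inv_smul_prod (measure_univ_sub_eq_of_le hγμ hγν hmass),
      Measure.map_apply measurable_fst .univ, preimage_univ]
  have : IsFiniteMeasure σ := isFiniteMeasure_of_le _ hσ
  calc transportCost μ ν ≤ ∫ p, dist p.1 p.2 ^ 2 ∂overlapCoupling μ ν γ :=
        transportCost_le_integral hξμ hξν
    _ = ∫ p, dist p.1 p.2 ^ 2 ∂σ := by
        rw [hξ, integral_add_measure (hint.mono_measure (hξ ▸ Measure.le_add_right le_rfl))
          (hint.mono_measure hσ), integral_map (by fun_prop) (by fun_prop)]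
        simp
    _ ≤ ∫ _, diam s ^ 2 ∂σ :=
        integral_mono_ae (hint.mono_measure hσ) (integrable_const _)
          ((Measure.absolutelyContinuous_of_le hσ).ae_le hbound)
    _ = diam s ^ 2 * ((μ - γ) univ).toReal := by
        rw [integral_const, smul_eq_mul, Measure.real, hσuniv, mul_comm]

lemma isProbabilityMeasure_unifMeasure {C : Set (Euc n)} (h0 : volume C ≠ 0)
    (htop : volume C ≠ ⊤) :
    IsProbabilityMeasure (unifMeasure C) :=
  ProbabilityTheory.cond_isProbabilityMeasure_of_finite h0 htop

lemma ae_unifMeasure_mem {C : Set (Euc n)} (hC : MeasurableSet C) : ∀ᵐ x ∂unifMeasure C, x ∈ C :=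
  Measure.ae_smul_measure (ae_restrict_mem hC) _

lemma transportCost_unifMeasure_le {P Q : Set (Euc n)} (hPm : MeasurableSet P)
    (hQm : MeasurableSet Q) (hPb : Bornology.IsBounded P) (hQb : Bornology.IsBounded Q)
    (hP0 : volume P ≠ 0) (hQ0 : volume Q ≠ 0) :
    transportCost (unifMeasure P) (unifMeasure Q) ≤
      diam (P ∪ Q) ^ 2 * ((volume (symmDiff P Q)).toReal / (volume Q).toReal) := by
  have hPtop := hPb.measure_lt_top (μ := volume).ne
  have hQtop := hQb.measure_lt_top (μ := volume).ne
  have := isProbabilityMeasure_unifMeasure hP0 hPtop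
  have := isProbabilityMeasure_unifMeasure hQ0 hQtop
  set b := max (volume P) (volume Q)
  set γ : Measure (Euc n) := b⁻¹ • volume.restrict (P ∩ Q)
  have hγ : ∀ {C : Set (Euc n)}, volume C ≤ b → P ∩ Q ⊆ C → γ ≤ unifMeasure C := by
    intro C hCb hC
    refine Measure.le_iff.2 fun s hs => ?_
    simp only [γ, unifMeasure, Measure.smul_apply, Measure.restrict_apply hs, smul_eq_mul]
    exact mul_le_mul' (ENNReal.inv_le_inv.2 hCb) (measure_mono (inter_subset_inter_right _ hC))
  have hγuniv : γ univ = volume (P ∩ Q) / b := by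
    simp [γ, ENNReal.div_eq_inv_mul]
  have : IsFiniteMeasure γ := isFiniteMeasure_of_le _ (hγ (le_max_left _ _) inter_subset_left)
  calc transportCost (unifMeasure P) (unifMeasure Q)
      ≤ diam (P ∪ Q) ^ 2 * ((unifMeasure P - γ) univ).toReal :=
        transportCost_le_of_common_le (hγ (le_max_left _ _) inter_subset_left)
          (hγ (le_max_right _ _) inter_subset_right) (by simp)
          (hPb.union hQb) ((ae_unifMeasure_mem hPm).mono fun x => Or.inl)
          ((ae_unifMeasure_mem hQm).mono fun x => Or.inr)
    _ ≤ diam (P ∪ Q) ^ 2 * ((volume (symmDiff P Q)).toReal / (volume Q).toReal) := by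
        rw [Measure.sub_apply .univ (hγ (le_max_left _ _) inter_subset_left), measure_univ,
          hγuniv, ← ENNReal.toReal_div]
        gcongr
        · exact ENNReal.div_ne_top (measure_symmDiff_ne_top hPtop hQtop) hQ0
        · exact one_sub_measure_inter_div_max_le volume hPtop hQ0 hQtop

end Transport

section Geometry

variable {E : Type*} [NormedAddCommGroup E] [NormedSpace ℝ E]

lemma dist_le_two_mul_dist_homothety_add (c x y : E) :
    dist x c ≤ 2 * dist (AffineMap.homothety x (2⁻¹ : ℝ) y) c + dist y c := by
  have hx : x - c = (2 : ℝ) • (AffineMap.homothety x (2⁻¹ : ℝ) y - c) - (y - c) := by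
    simp only [AffineMap.homothety_apply, vsub_eq_sub, vadd_eq_add]
    module
  rw [dist_eq_norm, hx, dist_eq_norm, dist_eq_norm]
  refine (norm_sub_le _ _).trans ?_
  rw [norm_smul, Real.norm_two]

variable [MeasurableSpace E] [BorelSpace E] [FiniteDimensional ℝ E] (μ : Measure E)
  [μ.IsAddHaarMeasure]

lemma subset_closedBall_of_measure_symmDiff_lt {P Q : Set E} (hP : Convex ℝ P) {c : E} {R : ℝ}
    (hQ : Q ⊆ closedBall c R)
    (h : μ (symmDiff P Q) < ENNReal.ofReal (2⁻¹ ^ Module.finrank ℝ E) * μ (P ∩ Q)) :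
    P ⊆ closedBall c (3 * R) := by
  intro x hx
  by_contra hxR
  rw [mem_closedBall, not_le] at hxR
  have hsub : AffineMap.homothety x (2⁻¹ : ℝ) '' (P ∩ Q) ⊆ symmDiff P Q := by
    rintro _ ⟨y, ⟨hyP, hyQ⟩, rfl⟩
    refine Or.inl ⟨?_, fun hzQ => ?_⟩
    · rw [AffineMap.homothety_eq_lineMap]
      exact hP.lineMap_mem hx hyP ⟨by norm_num, by norm_num⟩
    · linarith [dist_le_two_mul_dist_homothety_add c x y, mem_closedBall.1 (hQ hzQ),
        mem_closedBall.1 (hQ hyQ)]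
  have := (measure_mono hsub).trans_lt h
  rw [Measure.addHaar_image_homothety, abs_of_nonneg (by positivity)] at this
  exact lt_irrefl _ this

lemma eventually_subset_closedBall_of_tendsto_measure_symmDiff {ι : Type*} {l : Filter ι}
    {P : ι → Set E} {Q : Set E} (hP : ∀ i, Convex ℝ (P i)) {c : E} {R : ℝ}
    (hQ : Q ⊆ closedBall c R) (hQ0 : μ Q ≠ 0)
    (h : Tendsto (fun i => μ (symmDiff (P i) Q)) l (𝓝 0)) :
    ∀ᶠ i in l, P i ⊆ closedBall c (3 * R) := by
  have hpos : 0 < ENNReal.ofReal (2⁻¹ ^ Module.finrank ℝ E) * μ Q :=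
    ENNReal.mul_pos (ENNReal.ofReal_pos.2 (by positivity)).ne' hQ0
  filter_upwards [h.eventually_lt (ENNReal.Tendsto.const_mul
    (tendsto_measure_inter_of_tendsto_measure_symmDiff h) (.inr ENNReal.ofReal_ne_top)) hpos]
    with i hi
  exact subset_closedBall_of_measure_symmDiff_lt μ (hP i) hQ hi

end Geometry

namespace IsConvexBody

variable {n : ℕ} {C : Set (Euc n)}

lemma measurableSet (h : IsConvexBody C) : MeasurableSet C := h.2.1.isClosed.measurableSet

lemma isBounded (h : IsConvexBody C) : Bornology.IsBounded C := h.2.1.isBounded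

lemma volume_ne_zero (h : IsConvexBody C) : volume C ≠ 0 :=
  (Measure.measure_pos_of_nonempty_interior _ h.2.2).ne'

end IsConvexBody

/-- If convex bodies `P i` converge to the convex body `Q` in the
symmetric-difference volume distance `d^V`, then the normalized uniform
measures converge in the `L²`-Wasserstein distance. -/
theorem stmt2 (n : ℕ) (P : ℕ → Set (Euc n)) (Q : Set (Euc n))
    (hP : ∀ i, IsConvexBody (P i)) (hQ : IsConvexBody Q)
    (h : Tendsto (fun i => (volume (symmDiff (P i) Q)).toReal) atTop (𝓝 0)) :
    Tendsto (fun i => W2 (unifMeasure (P i)) (unifMeasure Q)) atTop (𝓝 0) := by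
  obtain ⟨R, hR, hQR⟩ := hQ.isBounded.subset_closedBall_lt 0 0
  have hsymm : Tendsto (fun i => volume (symmDiff (P i) Q)) atTop (𝓝 0) :=
    (ENNReal.tendsto_toReal_iff (fun i => measure_symmDiff_ne_top
      (hP i).isBounded.measure_lt_top.ne hQ.isBounded.measure_lt_top.ne)
      ENNReal.zero_ne_top).1 (by simpa using h)
  have hbounded := eventually_subset_closedBall_of_tendsto_measure_symmDiff volume
    (fun i => (hP i).1) hQR hQ.volume_ne_zero hsymm
  have hcost :
      Tendsto (fun i => transportCost (unifMeasure (P i)) (unifMeasure Q)) atTop (𝓝 0) := by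
    refine squeeze_zero' (.of_forall fun i => transportCost_nonneg _ _) ?_
      (by simpa using (h.div_const (volume Q).toReal).const_mul ((2 * (3 * R)) ^ 2))
    filter_upwards [hbounded] with i hi
    refine (transportCost_unifMeasure_le (hP i).measurableSet hQ.measurableSet (hP i).isBounded
      hQ.isBounded (hP i).volume_ne_zero hQ.volume_ne_zero).trans ?_
    have hQ3R : Q ⊆ closedBall 0 (3 * R) := hQR.trans (closedBall_subset_closedBall (by linarith))
    gcongr
    exact (diam_mono (union_subset hi hQ3R) isBounded_closedBall).trans
      (diam_closedBall (by positivity))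
  simpa [W2] using hcost.sqrt
end

section
/- Let {P_i} be a sequence of Delzant polytopes in ℝ² converging in Hausdorff distance to a Delzant polytope P. Then for each edge of P with primitive inward integral normal vector ν, there exists (after passing to a subsequence) a sequence of edges of P_i whose primitive inward integral normal vectors ν_i satisfy ν_i → ν; in fact ν_i = ν for all sufficiently large i. -/
open MeasureTheory Filter Topology Metric
open scoped RealInnerProductSpace ENNReal

/-- An integral vector: all coordinates are integers. -/
def IsIntegralVec {n : ℕ} (v : Euc n) : Prop := ∀ j, ∃ m : ℤ, v j = (m : ℝ)

/-- A primitive integral vector: a nonzero integral vector which is not a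
nontrivial integer multiple of another integral vector. -/
def IsPrimitiveVec {n : ℕ} (v : Euc n) : Prop :=
  IsIntegralVec v ∧ v ≠ 0 ∧ ∀ (k : ℤ) (u : Euc n),
    IsIntegralVec u → v = (k : ℝ) • u → k = 1 ∨ k = -1

/-- A Delzant polytope: a convex polytope with nonempty interior such that at
each vertex, the polytope locally coincides with a cone cut out by `n`
primitive integral inward normal vectors forming a `ℤ`-basis of `ℤⁿ`
(determinant `±1`); this encodes simplicity, rationality and smoothness. -/
def IsDelzant {n : ℕ} (P : Set (Euc n)) : Prop :=
  (∃ S : Finset (Euc n), P = convexHull ℝ (S : Set (Euc n))) ∧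
  (interior P).Nonempty ∧
  ∀ x ∈ Set.extremePoints ℝ P, ∃ ν : Fin n → Euc n,
    (∀ j, IsPrimitiveVec (ν j)) ∧
    |Matrix.det (Matrix.of fun j k => ν j k)| = 1 ∧
    ∃ ε > 0, P ∩ Metric.ball x ε =
      {y : Euc n | ∀ j, 0 ≤ ⟪y - x, ν j⟫} ∩ Metric.ball x ε

/-- `F` is a facet ((n-1)-dimensional nonempty exposed face) of `P`, with inward
normal vector `ν` and support value `lam`: `P ⊆ {⟨x,ν⟩ ≥ lam}` and
`F = P ∩ {⟨x,ν⟩ = lam}`. -/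
def IsFacetWithInwardNormal {n : ℕ} (P F : Set (Euc n)) (ν : Euc n) (lam : ℝ) : Prop :=
  IsExposed ℝ P F ∧ F.Nonempty ∧ Module.finrank ℝ (vectorSpan ℝ F) = n - 1 ∧
  (∀ x ∈ P, lam ≤ ⟪x, ν⟫) ∧ F = {x ∈ P | ⟪x, ν⟫ = lam}

/-- The number of facets of `P`. -/
noncomputable def facetCount {n : ℕ} (P : Set (Euc n)) : ℕ :=
  Set.ncard {F : Set (Euc n) | IsExposed ℝ P F ∧ F.Nonempty ∧
    Module.finrank ℝ (vectorSpan ℝ F) = n - 1}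

/-!
Let `x₀` minimise `⟪·, ν⟫` on `P i`. If `x₀` is not the unique minimiser, the minimising set is an
edge of `P i` with inward normal `ν`. Otherwise `x₀` is a vertex, and by the Delzant condition
`P i` lies in `x₀ + C`, where the cone `C` is spanned by an integral basis `w₁, w₂`. The heights
`⟪w₁, ν⟫, ⟪w₂, ν⟫` are positive integers, so unimodularity forces the slopes of `w₁, w₂` along
`ν⟂` to differ by at most `‖ν‖²`. Once `P i` is Hausdorff-close to `Q`, it contains two points
close to distinct points of the edge `F`: they lie almost at the height of `x₀` but far apart along
`ν⟂`, so some generator, hence all of `C`, is almost horizontal. This is incompatible with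
`P i` containing a point close to a point of `Q` strictly above `F`, which lies at a definite
height but within bounded distance of `x₀`.
-/

namespace Euc

def cross (u v : Euc 2) : ℝ := u 0 * v 1 - u 1 * v 0

lemma inner_eq (u v : Euc 2) : ⟪u, v⟫ = u 0 * v 0 + u 1 * v 1 := by
  simp [PiLp.inner_apply, Fin.sum_univ_two, mul_comm]

lemma norm_sq_eq (u : Euc 2) : ‖u‖ ^ 2 = u 0 ^ 2 + u 1 ^ 2 := by
  rw [← real_inner_self_eq_norm_sq, inner_eq]; ring

lemma cross_sub_left (u w v : Euc 2) : cross (u - w) v = cross u v - cross w v := by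
  simp only [cross, PiLp.sub_apply]; ring

lemma inner_sq_add_cross_sq (u v : Euc 2) : ⟪u, v⟫ ^ 2 + cross u v ^ 2 = ‖u‖ ^ 2 * ‖v‖ ^ 2 := by
  rw [inner_eq, norm_sq_eq, norm_sq_eq, cross]; ring

lemma abs_cross_le (u v : Euc 2) : |cross u v| ≤ ‖u‖ * ‖v‖ := by
  refine abs_le_of_sq_le_sq ?_ (by positivity)
  nlinarith [inner_sq_add_cross_sq u v, sq_nonneg ⟪u, v⟫]

lemma abs_cross_of_inner_eq_zero {u v : Euc 2} (h : ⟪u, v⟫ = 0) : |cross u v| = ‖u‖ * ‖v‖ := by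
  have := inner_sq_add_cross_sq u v
  rw [h, zero_pow two_ne_zero, zero_add, ← mul_pow] at this
  rw [← abs_of_nonneg (by positivity : 0 ≤ ‖u‖ * ‖v‖)]
  exact sq_eq_sq_iff_abs_eq_abs _ _ |>.mp this

lemma cross_mul_inner (a b v ν : Euc 2) :
    cross a b * ⟪v, ν⟫ = ⟪v, a⟫ * cross ν b + ⟪v, b⟫ * cross a ν := by
  simp only [cross, inner_eq]; ring

lemma cross_mul_cross (a b v ν : Euc 2) :
    cross a b * cross v ν = ⟪v, a⟫ * ⟪ν, b⟫ - ⟪v, b⟫ * ⟪ν, a⟫ := by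
  simp only [cross, inner_eq]; ring

lemma inner_mul_cross_sub (ν a b : Euc 2) :
    ⟪ν, a⟫ * cross ν b - ⟪ν, b⟫ * cross ν a = ‖ν‖ ^ 2 * cross a b := by
  rw [norm_sq_eq]; simp only [cross, inner_eq]; ring

lemma exists_inner_eq_inner_eq {a b : Euc 2} (h : cross a b ≠ 0) (s t : ℝ) :
    ∃ w : Euc 2, ⟪w, a⟫ = s ∧ ⟪w, b⟫ = t := by
  refine ⟨(cross a b)⁻¹ • !₂[s * b 1 - t * a 1, t * a 0 - s * b 0], ?_, ?_⟩ <;>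
  · rw [real_inner_smul_left, inner_eq]
    field_simp
    simp only [Matrix.cons_val_zero, Matrix.cons_val_one, Matrix.cons_val_fin_one, cross]
    ring

end Euc

open Euc

lemma IsIntegralVec.cross {u v : Euc 2} (hu : IsIntegralVec u) (hv : IsIntegralVec v) :
    ∃ m : ℤ, cross u v = m := by
  obtain ⟨⟨u₀, hu₀⟩, ⟨u₁, hu₁⟩⟩ := And.intro (hu 0) (hu 1)
  obtain ⟨⟨v₀, hv₀⟩, ⟨v₁, hv₁⟩⟩ := And.intro (hv 0) (hv 1)
  exact ⟨u₀ * v₁ - u₁ * v₀, by simp [Euc.cross, hu₀, hu₁, hv₀, hv₁]⟩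

-- `σ, τ` are the slopes of the two generators of a plane cone, and a point of the cone is
-- `a • g₁ + b • g₂` with the generators `gᵢ` normalised to height `1`: its height is `a + b`
-- and its width `σ * a + τ * b`.
lemma mul_abs_add_mul_sub_le {σ τ a₁ b₁ a₂ b₂ a₃ b₃ ε η : ℝ}
    (ha₁ : 0 ≤ a₁) (hb₁ : 0 ≤ b₁) (ha₂ : 0 ≤ a₂) (hb₂ : 0 ≤ b₂) (ha₃ : 0 ≤ a₃) (hb₃ : 0 ≤ b₃)
    (h₁ : a₁ + b₁ ≤ ε) (h₂ : a₂ + b₂ ≤ ε) (h₃ : η ≤ a₃ + b₃) (hη : 0 ≤ η) :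
    η * |σ * (a₁ - a₂) + τ * (b₁ - b₂)| ≤ ε * (2 * |σ * a₃ + τ * b₃| + η * |σ - τ|) := by
  have hwidth : |σ * (a₁ - a₂) + τ * (b₁ - b₂)| ≤ ε * (|σ| + |τ|) := by
    have ha : |a₁ - a₂| ≤ ε := abs_sub_le_iff.mpr ⟨by linarith, by linarith⟩
    have hb : |b₁ - b₂| ≤ ε := abs_sub_le_iff.mpr ⟨by linarith, by linarith⟩
    calc |σ * (a₁ - a₂) + τ * (b₁ - b₂)| ≤ |σ| * |a₁ - a₂| + |τ| * |b₁ - b₂| := by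
          rw [← abs_mul, ← abs_mul]; exact abs_add_le _ _
      _ ≤ |σ| * ε + |τ| * ε := by gcongr
      _ = ε * (|σ| + |τ|) := by ring
  have hslopes : η * (|σ| + |τ|) ≤ 2 * |σ * a₃ + τ * b₃| + η * |σ - τ| := by
    rcases le_total 0 σ with hσ | hσ <;> rcases le_total 0 τ with hτ | hτ
    · rw [abs_of_nonneg hσ, abs_of_nonneg hτ, abs_of_nonneg (by positivity : 0 ≤ σ * a₃ + τ * b₃)]
      rcases le_total σ τ with h | h
      · rw [abs_of_nonpos (by linarith : σ - τ ≤ 0)]; nlinarith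
      · rw [abs_of_nonneg (by linarith : 0 ≤ σ - τ)]; nlinarith
    · rw [abs_of_nonneg hσ, abs_of_nonpos hτ, abs_of_nonneg (by linarith : 0 ≤ σ - τ)]
      nlinarith [abs_nonneg (σ * a₃ + τ * b₃)]
    · rw [abs_of_nonpos hσ, abs_of_nonneg hτ, abs_of_nonpos (by linarith : σ - τ ≤ 0)]
      nlinarith [abs_nonneg (σ * a₃ + τ * b₃)]
    · rw [abs_of_nonpos hσ, abs_of_nonpos hτ,
        abs_of_nonpos (by nlinarith : σ * a₃ + τ * b₃ ≤ 0)]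
      rcases le_total σ τ with h | h
      · rw [abs_of_nonpos (by linarith : σ - τ ≤ 0)]; nlinarith
      · rw [abs_of_nonneg (by linarith : 0 ≤ σ - τ)]; nlinarith
  have hε : 0 ≤ ε := by linarith
  calc η * |σ * (a₁ - a₂) + τ * (b₁ - b₂)| ≤ η * (ε * (|σ| + |τ|)) := by gcongr
    _ = ε * (η * (|σ| + |τ|)) := by ring
    _ ≤ ε * (2 * |σ * a₃ + τ * b₃| + η * |σ - τ|) := by gcongr

lemma one_le_cross_mul_cross {a b ν : Euc 2} (ha : IsIntegralVec a) (hb : IsIntegralVec b)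
    (hν : IsIntegralVec ν) (hdet : |cross a b| = 1)
    (hpos : ∀ w, w ≠ 0 → 0 ≤ ⟪w, a⟫ → 0 ≤ ⟪w, b⟫ → 0 < ⟪w, ν⟫) :
    1 ≤ cross a b * cross ν b := by
  obtain ⟨w, hwa, hwb⟩ := exists_inner_eq_inner_eq (a := a) (b := b)
    (by rintro h; simp [h] at hdet) 1 0
  have hw : w ≠ 0 := by rintro rfl; simp at hwa
  have hd : cross a b * cross a b = 1 := by rw [← abs_mul_abs_self, hdet, one_mul]
  have hwν : ⟪w, ν⟫ = cross a b * cross ν b := by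
    linear_combination cross a b * cross_mul_inner a b w ν - ⟪w, ν⟫ * hd +
      (cross a b * cross ν b) * hwa + (cross a b * cross a ν) * hwb
  obtain ⟨k, hk⟩ := ha.cross hb
  obtain ⟨m, hm⟩ := hν.cross hb
  have := hpos w hw (hwa ▸ zero_le_one) hwb.ge
  rw [hwν] at this
  rw [hk, hm, ← Int.cast_mul] at this ⊢
  exact_mod_cast Int.cast_pos.mp this

lemma mul_abs_cross_le_of_unimodular {n : Fin 2 → Euc 2} {ν : Euc 2}
    (hn : ∀ j, IsIntegralVec (n j)) (hν : IsIntegralVec ν) (hdet : |cross (n 0) (n 1)| = 1)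
    (hpos : ∀ w, w ≠ 0 → (∀ j, 0 ≤ ⟪w, n j⟫) → 0 < ⟪w, ν⟫)
    {u₁ u₂ u₃ : Euc 2} (hu₁ : ∀ j, 0 ≤ ⟪u₁, n j⟫) (hu₂ : ∀ j, 0 ≤ ⟪u₂, n j⟫)
    (hu₃ : ∀ j, 0 ≤ ⟪u₃, n j⟫) {ε η : ℝ} (h₁ : ⟪u₁, ν⟫ ≤ ε) (h₂ : ⟪u₂, ν⟫ ≤ ε)
    (h₃ : η ≤ ⟪u₃, ν⟫) (hη : 0 ≤ η) :
    η * |cross (u₁ - u₂) ν| ≤ ε * (2 * |cross u₃ ν| + η * ‖ν‖ ^ 2) := by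
  set d := cross (n 0) (n 1)
  have hd : d * d = 1 := by rw [← abs_mul_abs_self, hdet, one_mul]
  -- `A, B` are the heights and `α, β` the widths, with respect to `ν`, of the generators of the
  -- cone, i.e. of the basis dual to `n 0, n 1`.
  set A := d * cross ν (n 1)
  set B := d * cross (n 0) ν
  set α := d * ⟪ν, n 1⟫
  set β := -(d * ⟪ν, n 0⟫)
  have hA : 1 ≤ A := one_le_cross_mul_cross (hn 0) (hn 1) hν hdet
    fun w hw h₀ h₁ => hpos w hw (Fin.forall_fin_two.mpr ⟨h₀, h₁⟩)
  have hB : 1 ≤ B := by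
    have hdet' : |cross (n 1) (n 0)| = 1 := by
      rw [← hdet, ← abs_neg]; congr 1; simp only [d, cross]; ring
    convert one_le_cross_mul_cross (hn 1) (hn 0) hν hdet'
      (fun w hw h₁ h₀ => hpos w hw (Fin.forall_fin_two.mpr ⟨h₀, h₁⟩)) using 1
    simp only [B, d, cross]; ring
  have hinner (u : Euc 2) : ⟪u, ν⟫ = A * ⟪u, n 0⟫ + B * ⟪u, n 1⟫ := by
    linear_combination d * cross_mul_inner (n 0) (n 1) u ν - ⟪u, ν⟫ * hd
  have hcross (u : Euc 2) : cross u ν = α * ⟪u, n 0⟫ + β * ⟪u, n 1⟫ := by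
    linear_combination d * cross_mul_cross (n 0) (n 1) u ν - cross u ν * hd
  -- Unimodularity: the slopes of the two generators differ by `‖ν‖ ^ 2 / (A * B)`.
  have hslopes : |α / A - β / B| ≤ ‖ν‖ ^ 2 := by
    have hαβ : α * B - A * β = ‖ν‖ ^ 2 * d := by
      have hanti : cross (n 0) ν = -cross ν (n 0) := by simp only [cross]; ring
      linear_combination (d * d * ⟪ν, n 1⟫) * hanti +
        (d * d) * inner_mul_cross_sub ν (n 0) (n 1) + (‖ν‖ ^ 2 * d) * hd
    have hAB : 0 < A * B := mul_pos (by linarith) (by linarith)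
    rw [div_sub_div _ _ (by linarith) (by linarith), hαβ, abs_div, abs_mul, hdet, mul_one,
      abs_of_pos hAB, abs_of_nonneg (by positivity)]
    exact div_le_self (by positivity) (one_le_mul_of_one_le_of_one_le hA hB)
  have hs (u : Euc 2) : α / A * (A * ⟪u, n 0⟫) + β / B * (B * ⟪u, n 1⟫) = cross u ν := by
    rw [hcross]; field_simp
  have hnonneg {u : Euc 2} (hu : ∀ j, 0 ≤ ⟪u, n j⟫) :
      0 ≤ A * ⟪u, n 0⟫ ∧ 0 ≤ B * ⟪u, n 1⟫ :=
    ⟨mul_nonneg (by linarith) (hu 0), mul_nonneg (by linarith) (hu 1)⟩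
  have key := mul_abs_add_mul_sub_le (σ := α / A) (τ := β / B) (hnonneg hu₁).1 (hnonneg hu₁).2
    (hnonneg hu₂).1 (hnonneg hu₂).2 (hnonneg hu₃).1 (hnonneg hu₃).2
    (hinner u₁ ▸ h₁) (hinner u₂ ▸ h₂) (hinner u₃ ▸ h₃) hη
  rw [hs, ← mul_sub, ← mul_sub, ← inner_sub_left, ← inner_sub_left, hs] at key
  have hε : 0 ≤ ε := (hinner u₁ ▸ h₁).trans' (add_nonneg (hnonneg hu₁).1 (hnonneg hu₁).2)
  exact key.trans (by gcongr)

section InnerProductSpace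

variable {E : Type*} [NormedAddCommGroup E] [InnerProductSpace ℝ E]

lemma inner_le_inner_add_dist_mul_norm (x y ν : E) : ⟪x, ν⟫ ≤ ⟪y, ν⟫ + dist x y * ‖ν‖ := by
  have := real_inner_le_norm (x - y) ν
  rw [inner_sub_left, ← dist_eq_norm] at this
  linarith

lemma isExposed_setOf_inner_eq {P : Set E} {ν : E} {lam : ℝ} (hlow : ∀ x ∈ P, lam ≤ ⟪x, ν⟫) :
    IsExposed ℝ P {x ∈ P | ⟪x, ν⟫ = lam} := by
  rintro ⟨x₀, hx₀, hx₀lam⟩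
  refine ⟨-innerSL ℝ ν, Set.ext fun x => ?_⟩
  simp only [Set.mem_ofPred_eq, neg_apply, innerSL_apply_apply, neg_le_neg_iff,
    real_inner_comm _ ν]
  exact and_congr_right fun hx =>
    ⟨fun h y hy => h ▸ hlow y hy, fun h => le_antisymm (hx₀lam ▸ h x₀ hx₀) (hlow x hx)⟩

lemma exists_lt_inner_of_interior_nonempty {Q : Set E} {ν : E} {lam : ℝ} (hν : ν ≠ 0)
    (hQ : (interior Q).Nonempty) (hlow : ∀ x ∈ Q, lam ≤ ⟪x, ν⟫) : ∃ z ∈ Q, lam < ⟪z, ν⟫ := by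
  obtain ⟨z, hz⟩ := hQ
  have hline : Tendsto (fun t : ℝ => z - t • ν) (𝓝[>] 0) (𝓝 z) :=
    tendsto_nhdsWithin_of_tendsto_nhds (Continuous.tendsto' (by fun_prop) 0 z (by simp))
  obtain ⟨t, htQ, ht⟩ := ((hline.eventually (mem_interior_iff_mem_nhds.mp hz)).and
    self_mem_nhdsWithin).exists
  refine ⟨z, interior_subset hz, ?_⟩
  have := hlow _ htQ
  rw [inner_sub_left, real_inner_smul_left, real_inner_self_eq_norm_sq] at this
  have : 0 < t * ‖ν‖ ^ 2 := mul_pos ht (by positivity)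
  linarith

section LocalCone

variable {ι : Type*} {P : Set E} {x₀ : E} {n : ι → E} {ε : ℝ}

lemma eventually_add_smul_mem_ball (w : E) (hε : 0 < ε) :
    ∀ᶠ t in 𝓝 (0 : ℝ), x₀ + t • w ∈ ball x₀ ε := by
  have : Tendsto (fun t : ℝ => x₀ + t • w) (𝓝 0) (𝓝 x₀) :=
    Continuous.tendsto' (by fun_prop) 0 x₀ (by simp)
  exact this.eventually (ball_mem_nhds x₀ hε)

lemma inner_sub_nonneg_of_inter_ball_eq (hε : 0 < ε)
    (hloc : P ∩ ball x₀ ε = {y | ∀ j, 0 ≤ ⟪y - x₀, n j⟫} ∩ ball x₀ ε) (hP : Convex ℝ P)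
    (hx₀ : x₀ ∈ P) {y : E} (hy : y ∈ P) (j : ι) : 0 ≤ ⟪y - x₀, n j⟫ := by
  obtain ⟨t, hball, ht⟩ := (((eventually_add_smul_mem_ball (y - x₀) hε).filter_mono
    nhdsWithin_le_nhds).and (Ioo_mem_nhdsGT one_pos : ∀ᶠ t in 𝓝[>] (0 : ℝ), t ∈ Set.Ioo 0 1)).exists
  have hmem : x₀ + t • (y - x₀) ∈ P ∩ ball x₀ ε :=
    ⟨hP.add_smul_sub_mem hx₀ hy ⟨ht.1.le, ht.2.le⟩, hball⟩
  have := (hloc ▸ hmem).1 j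
  rw [add_sub_cancel_left, real_inner_smul_left] at this
  exact nonneg_of_mul_nonneg_right this ht.1

lemma exists_add_smul_mem_of_inter_ball_eq (hε : 0 < ε)
    (hloc : P ∩ ball x₀ ε = {y | ∀ j, 0 ≤ ⟪y - x₀, n j⟫} ∩ ball x₀ ε) {w : E}
    (hw : ∀ j, 0 ≤ ⟪w, n j⟫) :
    ∃ t > (0 : ℝ), x₀ + t • w ∈ P := by
  obtain ⟨t, hball, ht⟩ := (((eventually_add_smul_mem_ball w hε).filter_mono
    nhdsWithin_le_nhds).and (self_mem_nhdsWithin : ∀ᶠ t in 𝓝[>] (0 : ℝ), 0 < t)).exists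
  have hmem : x₀ + t • w ∈ {y | ∀ j, 0 ≤ ⟪y - x₀, n j⟫} ∩ ball x₀ ε := ⟨fun j => by
    rw [add_sub_cancel_left, real_inner_smul_left]
    exact mul_nonneg ht.le (hw j), hball⟩
  exact ⟨t, ht, (hloc ▸ hmem).1⟩

end LocalCone

end InnerProductSpace

section Polytopes

variable {n : ℕ} {P F : Set (Euc n)} {ν : Euc n} {lam : ℝ}

lemma IsDelzant.isCompact (hP : IsDelzant P) : IsCompact P := by
  obtain ⟨S, rfl⟩ := hP.1
  exact S.finite_toSet.isCompact_convexHull (𝕜 := ℝ)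

lemma IsDelzant.convex (hP : IsDelzant P) : Convex ℝ P := by
  obtain ⟨S, rfl⟩ := hP.1
  exact convex_convexHull ℝ _

lemma IsDelzant.nonempty (hP : IsDelzant P) : P.Nonempty :=
  hP.2.1.mono interior_subset

lemma IsFacetWithInwardNormal.exists_ne (hn : 2 ≤ n) (hF : IsFacetWithInwardNormal P F ν lam) :
    ∃ p ∈ F, ∃ q ∈ F, p ≠ q := by
  by_contra! h
  have hrank := hF.2.2.1
  rw [vectorSpan_of_subsingleton ℝ h, finrank_bot] at hrank
  omega

end Polytopes

lemma isFacetWithInwardNormal_of_ne {P : Set (Euc 2)} {ν : Euc 2} {lam : ℝ} (hν : ν ≠ 0)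
    (hlow : ∀ x ∈ P, lam ≤ ⟪x, ν⟫) {x y : Euc 2} (hx : x ∈ P) (hy : y ∈ P) (hxy : x ≠ y)
    (hxl : ⟪x, ν⟫ = lam) (hyl : ⟪y, ν⟫ = lam) :
    IsFacetWithInwardNormal P {z ∈ P | ⟪z, ν⟫ = lam} ν lam := by
  refine ⟨isExposed_setOf_inner_eq hlow, ⟨x, hx, hxl⟩, ?_, hlow, rfl⟩
  have hle : vectorSpan ℝ {z ∈ P | ⟪z, ν⟫ = lam} ≤ (ℝ ∙ ν)ᗮ := by
    rw [vectorSpan_def, Submodule.span_le]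
    rintro _ ⟨a, ha, b, hb, rfl⟩
    rw [SetLike.mem_coe, Submodule.mem_orthogonal_singleton_iff_inner_left]
    change ⟪a - b, ν⟫ = 0
    rw [inner_sub_left, ha.2, hb.2, sub_self]
  have hne : vectorSpan ℝ {z ∈ P | ⟪z, ν⟫ = lam} ≠ ⊥ := by
    rw [Ne, vectorSpan_eq_bot_iff_subsingleton]
    exact fun h => hxy (h ⟨hx, hxl⟩ ⟨hy, hyl⟩)
  have : Fact (Module.finrank ℝ (Euc 2) = 1 + 1) := ⟨by simp⟩
  have hrank := Submodule.finrank_mono hle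
  have hline : Module.finrank ℝ (ℝ ∙ ν)ᗮ = 1 := Submodule.finrank_orthogonal_span_singleton hν
  have := Submodule.finrank_eq_zero.not.mpr hne
  simp only [Nat.add_one_sub_one]
  omega

lemma IsDelzant.mul_abs_cross_le {P : Set (Euc 2)} {ν x₀ : Euc 2} (hP : IsDelzant P)
    (hν : IsIntegralVec ν) (hx₀ : x₀ ∈ P) (huniq : ∀ y ∈ P, y ≠ x₀ → ⟪x₀, ν⟫ < ⟪y, ν⟫)
    {u₁ u₂ u₃ : Euc 2} (hu₁ : u₁ ∈ P) (hu₂ : u₂ ∈ P) (hu₃ : u₃ ∈ P) {ε η : ℝ}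
    (h₁ : ⟪u₁ - x₀, ν⟫ ≤ ε) (h₂ : ⟪u₂ - x₀, ν⟫ ≤ ε) (h₃ : η ≤ ⟪u₃ - x₀, ν⟫) (hη : 0 ≤ η) :
    η * |cross (u₁ - u₂) ν| ≤ ε * (2 * |cross (u₃ - x₀) ν| + η * ‖ν‖ ^ 2) := by
  have hlow (y : Euc 2) (hy : y ∈ P) : ⟪x₀, ν⟫ ≤ ⟪y, ν⟫ := by
    rcases eq_or_ne y x₀ with rfl | h
    exacts [le_rfl, (huniq y hy h).le]
  have hface : {y ∈ P | ⟪y, ν⟫ = ⟪x₀, ν⟫} = {x₀} := Set.ext fun y =>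
    ⟨fun ⟨hy, hyν⟩ => by_contra fun h => (huniq y hy h).ne' hyν,
      fun h => by rw [Set.mem_singleton_iff.mp h]; exact ⟨hx₀, rfl⟩⟩
  have hext : x₀ ∈ P.extremePoints ℝ := by
    simpa only [hface, isExtreme_singleton] using (isExposed_setOf_inner_eq hlow).isExtreme
  obtain ⟨n, hprim, hdet, ε₀, hε₀, hloc⟩ := hP.2.2 x₀ hext
  have hcone {y : Euc 2} (hy : y ∈ P) : ∀ j, 0 ≤ ⟪y - x₀, n j⟫ :=
    inner_sub_nonneg_of_inter_ball_eq hε₀ hloc hP.convex hx₀ hy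
  have hpos (w : Euc 2) (hw : w ≠ 0) (hwn : ∀ j, 0 ≤ ⟪w, n j⟫) : 0 < ⟪w, ν⟫ := by
    obtain ⟨t, ht, htP⟩ := exists_add_smul_mem_of_inter_ball_eq hε₀ hloc hwn
    have := huniq _ htP (by simpa [ht.ne'] using hw)
    rw [inner_add_left, real_inner_smul_left] at this
    exact pos_of_mul_pos_right (by linarith) ht.le
  have hdet' : |cross (n 0) (n 1)| = 1 := by rwa [Matrix.det_fin_two] at hdet
  simpa using mul_abs_cross_le_of_unimodular (fun j => (hprim j).1) hν hdet' hpos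
    (hcone hu₁) (hcone hu₂) (hcone hu₃) h₁ h₂ h₃ hη

lemma IsCompact.exists_facet_or_exists_unique_min {P : Set (Euc 2)} {ν : Euc 2}
    (hP : IsCompact P) (hne : P.Nonempty) (hν : ν ≠ 0) :
    (∃ F lam, IsFacetWithInwardNormal P F ν lam) ∨
      ∃ x₀ ∈ P, ∀ y ∈ P, y ≠ x₀ → ⟪x₀, ν⟫ < ⟪y, ν⟫ := by
  obtain ⟨x₀, hx₀, hmin⟩ := hP.exists_isMinOn hne
    (continuous_id.inner (𝕜 := ℝ) continuous_const).continuousOn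
  by_cases hface : ∃ y ∈ P, y ≠ x₀ ∧ ⟪y, ν⟫ = ⟪x₀, ν⟫
  · obtain ⟨y, hy, hne, hyl⟩ := hface
    exact .inl ⟨_, _, isFacetWithInwardNormal_of_ne hν (fun y hy => hmin hy) hx₀ hy hne.symm rfl hyl⟩
  push Not at hface
  exact .inr ⟨x₀, hx₀, fun y hy hne => (hmin hy).lt_of_ne (hface y hy hne).symm⟩

lemma dist_sub_two_mul_mul_norm_le_abs_cross {p q p' q' ν : Euc 2} {δ : ℝ}
    (hpq : ⟪p - q, ν⟫ = 0) (hp : dist p' p ≤ δ) (hq : dist q' q ≤ δ) :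
    (dist p q - 2 * δ) * ‖ν‖ ≤ |cross (p' - q') ν| := by
  have hsplit : cross (p - q) ν = cross (p' - q') ν - cross (p' - p) ν + cross (q' - q) ν := by
    simp only [cross_sub_left]; ring
  have hpq' : |cross (p - q) ν| = dist p q * ‖ν‖ := by
    rw [abs_cross_of_inner_eq_zero hpq, dist_eq_norm]
  have hp' := (abs_cross_le (p' - p) ν).trans (mul_le_mul_of_nonneg_right hp (norm_nonneg ν))
  have hq' := (abs_cross_le (q' - q) ν).trans (mul_le_mul_of_nonneg_right hq (norm_nonneg ν))
  have := abs_sub (cross (p' - q') ν) (cross (p' - p) ν)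
  have := hsplit ▸ abs_add_le (cross (p' - q') ν - cross (p' - p) ν) (cross (q' - q) ν)
  linarith

lemma IsDelzant.exists_facet_of_hausdorffDist_lt {P Q : Set (Euc 2)} {ν p q z : Euc 2}
    {lam δ η L D : ℝ} (hP : IsDelzant P) (hν : IsIntegralVec ν) (hν0 : ν ≠ 0)
    (hQ : Bornology.IsBounded Q) (hlow : ∀ x ∈ Q, lam ≤ ⟪x, ν⟫) (hp : p ∈ Q) (hq : q ∈ Q)
    (hz : z ∈ Q) (hpl : ⟪p, ν⟫ = lam) (hql : ⟪q, ν⟫ = lam) (hzl : lam + η ≤ ⟪z, ν⟫)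
    (hL : L ≤ dist p q) (hD : diam Q ≤ D) (hPQ : hausdorffDist P Q < δ)
    (hδη : 2 * δ * ‖ν‖ ≤ η)
    (hsmall : 2 * δ * ‖ν‖ * (2 * ((D + 2 * δ) * ‖ν‖) + (η - 2 * δ * ‖ν‖) * ‖ν‖ ^ 2) <
      (η - 2 * δ * ‖ν‖) * ((L - 2 * δ) * ‖ν‖)) :
    ∃ F lam', IsFacetWithInwardNormal P F ν lam' := by
  refine (hP.isCompact.exists_facet_or_exists_unique_min hP.nonempty hν0).resolve_right ?_
  rintro ⟨x₀, hx₀, huniq⟩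
  have hfin : hausdorffEDist P Q ≠ ⊤ := hausdorffEDist_ne_top_of_nonempty_of_bounded
    hP.nonempty ⟨p, hp⟩ hP.isCompact.isBounded hQ
  obtain ⟨p', hp', hpp'⟩ := exists_dist_lt_of_hausdorffDist_lt' hp hPQ hfin
  obtain ⟨q', hq', hqq'⟩ := exists_dist_lt_of_hausdorffDist_lt' hq hPQ hfin
  obtain ⟨z', hz', hzz'⟩ := exists_dist_lt_of_hausdorffDist_lt' hz hPQ hfin
  obtain ⟨x, hx, hx₀x⟩ := exists_dist_lt_of_hausdorffDist_lt hx₀ hPQ hfin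
  have hV : 0 ≤ ‖ν‖ := norm_nonneg ν
  have hδV (y y' : Euc 2) (h : dist y y' < δ) : dist y y' * ‖ν‖ ≤ δ * ‖ν‖ := by gcongr
  have hx₀_ge : lam - δ * ‖ν‖ ≤ ⟪x₀, ν⟫ := by
    have := inner_le_inner_add_dist_mul_norm x x₀ ν
    linarith [hlow x hx, hδV x x₀ (dist_comm x₀ x ▸ hx₀x)]
  have hlow_near {y y' : Euc 2} (hy : ⟪y, ν⟫ = lam) (h : dist y' y < δ) :
      ⟪y' - x₀, ν⟫ ≤ 2 * δ * ‖ν‖ := by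
    have := inner_le_inner_add_dist_mul_norm y' y ν
    rw [inner_sub_left]
    linarith [hδV y' y h]
  have h₃ : η - 2 * δ * ‖ν‖ ≤ ⟪z' - x₀, ν⟫ := by
    have hz'z := inner_le_inner_add_dist_mul_norm z z' ν
    have hp'p := inner_le_inner_add_dist_mul_norm p' p ν
    have hx₀p' : ⟪x₀, ν⟫ ≤ ⟪p', ν⟫ := by
      rcases eq_or_ne p' x₀ with rfl | h
      exacts [le_rfl, (huniq p' hp' h).le]
    have := hδV z z' (by rwa [dist_comm])
    rw [inner_sub_left]
    linarith [hδV p' p hpp']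
  have hη : 0 ≤ η - 2 * δ * ‖ν‖ := by linarith
  have key := hP.mul_abs_cross_le hν hx₀ huniq hp' hq' hz' (hlow_near hpl hpp')
    (hlow_near hql hqq') h₃ hη
  have hwidth : (L - 2 * δ) * ‖ν‖ ≤ |cross (p' - q') ν| :=
    (mul_le_mul_of_nonneg_right (by linarith) hV).trans
      (dist_sub_two_mul_mul_norm_le_abs_cross (by rw [inner_sub_left, hpl, hql, sub_self])
        hpp'.le hqq'.le)
  have hheight : |cross (z' - x₀) ν| ≤ (D + 2 * δ) * ‖ν‖ := by
    refine (abs_cross_le _ _).trans (mul_le_mul_of_nonneg_right ?_ hV)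
    rw [← dist_eq_norm]
    linarith [dist_triangle4 z' z x x₀, dist_le_diam_of_mem hQ hz hx, dist_comm z' z,
      dist_comm x₀ x]
  have hδ : 0 ≤ δ := hausdorffDist_nonneg.trans hPQ.le
  have := calc (η - 2 * δ * ‖ν‖) * ((L - 2 * δ) * ‖ν‖)
      ≤ (η - 2 * δ * ‖ν‖) * |cross (p' - q') ν| := by gcongr
    _ ≤ 2 * δ * ‖ν‖ * (2 * |cross (z' - x₀) ν| + (η - 2 * δ * ‖ν‖) * ‖ν‖ ^ 2) := key
    _ ≤ 2 * δ * ‖ν‖ * (2 * ((D + 2 * δ) * ‖ν‖) + (η - 2 * δ * ‖ν‖) * ‖ν‖ ^ 2) := by gcongr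
  linarith

lemma IsFacetWithInwardNormal.eventually_exists_facet {α : Type*} {l : Filter α}
    {P : α → Set (Euc 2)} {Q F : Set (Euc 2)} {ν : Euc 2} {lam : ℝ}
    (hF : IsFacetWithInwardNormal Q F ν lam) (hQ : IsDelzant Q) (hP : ∀ i, IsDelzant (P i))
    (hν : IsIntegralVec ν) (hν0 : ν ≠ 0) (h : Tendsto (fun i => hausdorffDist (P i) Q) l (𝓝 0)) :
    ∀ᶠ i in l, ∃ F' lam', IsFacetWithInwardNormal (P i) F' ν lam' := by
  obtain ⟨p, hpF, q, hqF, hpq⟩ := hF.exists_ne le_rfl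
  obtain ⟨-, -, -, hlow, rfl⟩ := hF
  obtain ⟨z, hz, hzl⟩ := exists_lt_inner_of_interior_nonempty hν0 hQ.2.1 hlow
  set η := ⟪z, ν⟫ - lam
  have hη : 0 < η := sub_pos.mpr hzl
  have hV : 0 < ‖ν‖ := norm_pos_iff.mpr hν0
  have hL : 0 < dist p q := dist_pos.mpr hpq
  have hsmall : ∀ᶠ δ in 𝓝 (0 : ℝ), 2 * δ * ‖ν‖ < η ∧
      2 * δ * ‖ν‖ * (2 * ((diam Q + 2 * δ) * ‖ν‖) + (η - 2 * δ * ‖ν‖) * ‖ν‖ ^ 2) <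
        (η - 2 * δ * ‖ν‖) * ((dist p q - 2 * δ) * ‖ν‖) :=
    (ContinuousAt.eventually_lt (by fun_prop) (by fun_prop) (by simpa using hη)).and
      (ContinuousAt.eventually_lt (by fun_prop) (by fun_prop) (by simp; positivity))
  obtain ⟨δ, ⟨hδη, hδ⟩, hδ0⟩ := ((hsmall.filter_mono nhdsWithin_le_nhds).and
    (self_mem_nhdsWithin : ∀ᶠ δ in 𝓝[>] (0 : ℝ), 0 < δ)).exists
  filter_upwards [h.eventually (gt_mem_nhds hδ0)] with i hi
  exact (hP i).exists_facet_of_hausdorffDist_lt hν hν0 hQ.isCompact.isBounded hlow hpF.1 hqF.1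
    hz hpF.2 hqF.2 (by simp [η]) le_rfl le_rfl hi hδη.le hδ

/-- For Delzant polygons `P i` in `ℝ²` converging in Hausdorff distance to a
Delzant polygon `Q`: for every edge of `Q` with primitive inward integral
normal `ν`, after passing to a subsequence there are edges of the `P i` whose
primitive inward integral normals `ν i` converge to `ν`, and in fact `ν i = ν`
for all sufficiently large `i`. -/
theorem stmt9 (P : ℕ → Set (Euc 2)) (Q : Set (Euc 2))
    (hP : ∀ i, IsDelzant (P i)) (hQ : IsDelzant Q)
    (h : Tendsto (fun i => Metric.hausdorffDist (P i) Q) atTop (𝓝 0))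
    (F : Set (Euc 2)) (ν : Euc 2) (lam : ℝ)
    (hνprim : IsPrimitiveVec ν)
    (hF : IsFacetWithInwardNormal Q F ν lam) :
    ∃ φ : ℕ → ℕ, StrictMono φ ∧
      ∃ (Fi : ℕ → Set (Euc 2)) (νi : ℕ → Euc 2) (lami : ℕ → ℝ),
        (∀ i, IsPrimitiveVec (νi i) ∧
          IsFacetWithInwardNormal (P (φ i)) (Fi i) (νi i) (lami i)) ∧
        Tendsto νi atTop (𝓝 ν) ∧ (∀ᶠ i in atTop, νi i = ν) := by
  obtain ⟨N, hN⟩ := eventually_atTop.mp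
    (hF.eventually_exists_facet hQ hP hνprim.1 hνprim.2.1 h)
  choose Fi lami hFi using fun i => hN (i + N) (Nat.le_add_left N i)
  exact ⟨(· + N), strictMono_id.add_const N, Fi, fun _ => ν, lami, fun i => ⟨hνprim, hFi i⟩,
    tendsto_const_nhds, .of_forall fun _ => rfl⟩
end
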